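/- arXiv:2410.19387 — 4 statements merged into one kernel-verified Lean document; each statement's English description precedes it below -/
import Mathlib

section
/- Let n ∈ ℕ, c, ω > 0 and α > q > 0. For ξ > 0 and s ≥ 0 define g_{n,α,ω}(ξ,s) := ((ξ+c−ω)²+s)^{n/2} / ((ξ+c+ω)²+s)^{(n+α+1)/2}, and set G(n) := ∫₀^∞ φ_q(ξ) · sup_{s≥0} g_{n,α,ω}(ξ,s) dξ. Then sup_{n∈ℕ} G(n) < ∞, and as n → ∞: G(n) = O(n^{q−α}) if q < α < 2q+1; G(n) = O(n^{-(q+1)} log n) if α = 2q+1; and G(n) = O(n^{-(α+1)/2}) if α > 2q+1. -/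
open Filter Topology MeasureTheory

noncomputable section

/-- The weight `φ_q(ξ) = 1` for `ξ < 1` and `ξ^q` for `ξ ≥ 1`. -/
def phiq (q ξ : ℝ) : ℝ := if ξ < 1 then 1 else ξ ^ q

/-- `g_{n,α,ω}(ξ,s) = ((ξ+c-ω)²+s)^{n/2} / ((ξ+c+ω)²+s)^{(n+α+1)/2}`. -/
def gfun (n : ℕ) (α c ω ξ s : ℝ) : ℝ :=
  ((ξ + c - ω) ^ 2 + s) ^ ((n : ℝ) / 2) / ((ξ + c + ω) ^ 2 + s) ^ (((n : ℝ) + α + 1) / 2)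

/-- `G(n) = ∫₀^∞ φ_q(ξ) sup_{s ≥ 0} g_{n,α,ω}(ξ,s) dξ` as an extended real number. -/
def Gint (α c ω q : ℝ) (n : ℕ) : ENNReal :=
  ∫⁻ ξ in Set.Ioi (0 : ℝ),
    ENNReal.ofReal (phiq q ξ * ⨆ s : Set.Ici (0 : ℝ), gfun n α c ω ξ s)

/-!
With `β = (α+1)/2`, `v = (ξ+c+ω)² + s` and `t = 4ω(ξ+c)/v ∈ (0,1]` one has
`g = t^β (1-t)^{n/2} / (4ω(ξ+c))^β`, so the elementary bound `t^β (1-t)^m ≤ (β/m)^β` gives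
`sup_s g ≲ n^{-β} (ξ+c)^{-β}`, while trivially `sup_s g ≤ (ξ+c)^{-(α+1)}`. Using the first bound on
`(0,1] ∪ (1,b]` and the second on `(b,∞)` gives `G(n) ≲ n^{-β} (1 + ∫_1^b ξ^{q-β} dξ) + b^{q-α}`.
Taking `b = 1` gives the uniform bound, and `b = n` the three regimes, according to whether
`q - β` is `> -1`, `= -1` or `< -1`.
-/

open Set Real

section

variable {α c ω q ξ s : ℝ} {n : ℕ}

theorem rpow_mul_one_sub_rpow_le {β m t : ℝ} (hβ : 0 < β) (hm : 0 < m) (ht₀ : 0 ≤ t)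
    (ht₁ : t ≤ 1) : t ^ β * (1 - t) ^ m ≤ (β / m) ^ β := by
  have h_one_sub : (1 - t) ^ m ≤ exp (-(t * m)) := by
    calc (1 - t) ^ m ≤ exp (-t) ^ m :=
          rpow_le_rpow (by linarith) (by linarith [add_one_le_exp (-t)]) hm.le
      _ = exp (-(t * m)) := by rw [← exp_mul, neg_mul]
  have h_pow : t ^ β ≤ (β / m) ^ β * exp (t * m) := by
    have hx : 0 ≤ t * m / β := by positivity
    calc t ^ β = ((β / m) * (t * m / β)) ^ β := by congr 1; field_simp
      _ = (β / m) ^ β * (t * m / β) ^ β := mul_rpow (by positivity) hx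
      _ ≤ (β / m) ^ β * exp (t * m / β) ^ β := by
          gcongr; linarith [add_one_le_exp (t * m / β)]
      _ = (β / m) ^ β * exp (t * m) := by rw [← exp_mul, div_mul_cancel₀ _ hβ.ne']
  calc t ^ β * (1 - t) ^ m ≤ (β / m) ^ β * exp (t * m) * exp (-(t * m)) :=
        mul_le_mul h_pow h_one_sub (by positivity) (by positivity)
    _ = (β / m) ^ β := by rw [mul_assoc, ← exp_add, add_neg_cancel, exp_zero, mul_one]

theorem gfun_le_rpow_neg (hξc : 0 < ξ + c) (hω : 0 ≤ ω) (hs : 0 ≤ s) (hα : 0 ≤ α + 1) :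
    gfun n α c ω ξ s ≤ (ξ + c) ^ (-(α + 1)) := by
  set v := (ξ + c + ω) ^ 2 + s
  have hv : (ξ + c) ^ 2 ≤ v := by nlinarith
  have hv₀ : 0 < v := lt_of_lt_of_le (by positivity) hv
  calc gfun n α c ω ξ s ≤ v ^ ((n : ℝ) / 2) / v ^ (((n : ℝ) + α + 1) / 2) := by
        unfold gfun; gcongr; nlinarith
    _ = v ^ (-((α + 1) / 2)) := by rw [← rpow_sub hv₀]; ring_nf
    _ ≤ ((ξ + c) ^ 2) ^ (-((α + 1) / 2)) :=
        rpow_le_rpow_of_nonpos (by positivity) hv (by linarith)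
    _ = (ξ + c) ^ (-(α + 1)) := by
        rw [← rpow_natCast, ← rpow_mul hξc.le]; ring_nf

theorem gfun_le_decay (hn : 0 < n) (hξc : 0 < ξ + c) (hω : 0 < ω) (hs : 0 ≤ s)
    (hα : 0 < α + 1) :
    gfun n α c ω ξ s ≤ ((α + 1) / (4 * ω)) ^ ((α + 1) / 2) * (n : ℝ) ^ (-((α + 1) / 2)) *
      (ξ + c) ^ (-((α + 1) / 2)) := by
  set β := (α + 1) / 2
  set v := (ξ + c + ω) ^ 2 + s
  set D := 4 * ω * (ξ + c)
  have hv₀ : 0 < v := by positivity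
  have hD₀ : 0 < D := by positivity
  set t := D / v with ht
  have ht₀ : 0 < t := by positivity
  have ht₁ : t ≤ 1 := (div_le_one hv₀).2 (by simp only [v, D]; nlinarith [sq_nonneg (ξ + c - ω)])
  have hnum : (ξ + c - ω) ^ 2 + s = v * (1 - t) := by
    rw [ht, mul_one_sub, mul_div_cancel₀ _ hv₀.ne']; ring
  have hden : v ^ β = D ^ β / t ^ β := by
    rw [← div_rpow hD₀.le ht₀.le, ht, div_div_cancel₀ hD₀.ne']
  have hn' : (0 : ℝ) < n := by exact_mod_cast hn
  calc gfun n α c ω ξ s = t ^ β * (1 - t) ^ ((n : ℝ) / 2) / D ^ β := by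
        unfold gfun
        rw [hnum, show ((n : ℝ) + α + 1) / 2 = n / 2 + β by ring, rpow_add hv₀,
          mul_rpow hv₀.le (by linarith), hden]
        field_simp
    _ ≤ (β / (n / 2)) ^ β / D ^ β := by
        gcongr; exact rpow_mul_one_sub_rpow_le (by positivity) (by positivity) ht₀.le ht₁
    _ = _ := by
        rw [show β / (n / 2) = (α + 1) / n by ring, div_rpow hα.le hn'.le,
          mul_rpow (by positivity) hξc.le,
          div_rpow hα.le (by positivity), rpow_neg hn'.le, rpow_neg hξc.le]
        field_simp

theorem iSup_gfun_le {U : ℝ} (h : ∀ s, 0 ≤ s → gfun n α c ω ξ s ≤ U) :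
    ⨆ s : Ici (0 : ℝ), gfun n α c ω ξ s ≤ U :=
  ciSup_le fun s => h s s.2

theorem phiq_of_le_one (hξ : ξ ≤ 1) : phiq q ξ = 1 := by
  unfold phiq
  split_ifs with h
  · rfl
  · rw [le_antisymm hξ (not_lt.1 h), one_rpow]

theorem phiq_of_one_le (hξ : 1 ≤ ξ) : phiq q ξ = ξ ^ q := if_neg hξ.not_gt

theorem phiq_mul_iSup_gfun_le_of_le_one (hn : 0 < n) (hξ : ξ ∈ Ioc 0 1) (hc : 0 < c)
    (hω : 0 < ω) (hα : 0 < α + 1) :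
    phiq q ξ * ⨆ s : Ici (0 : ℝ), gfun n α c ω ξ s ≤
      ((α + 1) / (4 * ω)) ^ ((α + 1) / 2) * (n : ℝ) ^ (-((α + 1) / 2)) *
        c ^ (-((α + 1) / 2)) := by
  rw [phiq_of_le_one hξ.2, one_mul]
  refine iSup_gfun_le fun s hs => (gfun_le_decay hn (by linarith [hξ.1]) hω hs hα).trans ?_
  exact mul_le_mul_of_nonneg_left
    (rpow_le_rpow_of_nonpos hc (by linarith [hξ.1]) (by linarith)) (by positivity)

theorem phiq_mul_iSup_gfun_le_decay (hn : 0 < n) (hξ : 1 ≤ ξ) (hc : 0 ≤ c) (hω : 0 < ω)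
    (hα : 0 < α + 1) :
    phiq q ξ * ⨆ s : Ici (0 : ℝ), gfun n α c ω ξ s ≤
      ((α + 1) / (4 * ω)) ^ ((α + 1) / 2) * (n : ℝ) ^ (-((α + 1) / 2)) *
        ξ ^ (q - (α + 1) / 2) := by
  have hξ₀ : 0 < ξ := by linarith
  rw [phiq_of_one_le hξ, sub_eq_add_neg, rpow_add hξ₀, mul_left_comm]
  gcongr
  refine iSup_gfun_le fun s hs => (gfun_le_decay hn (by linarith) hω hs hα).trans ?_
  exact mul_le_mul_of_nonneg_left
    (rpow_le_rpow_of_nonpos hξ₀ (by linarith) (by linarith)) (by positivity)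

theorem phiq_mul_iSup_gfun_le_rpow (hξ : 1 ≤ ξ) (hc : 0 ≤ c) (hω : 0 ≤ ω) (hα : 0 ≤ α + 1) :
    phiq q ξ * ⨆ s : Ici (0 : ℝ), gfun n α c ω ξ s ≤ ξ ^ (q - α - 1) := by
  have hξ₀ : 0 < ξ := by linarith
  rw [phiq_of_one_le hξ, sub_sub, sub_eq_add_neg, rpow_add hξ₀]
  gcongr
  refine iSup_gfun_le fun s hs => (gfun_le_rpow_neg (by linarith) hω hs hα).trans ?_
  exact rpow_le_rpow_of_nonpos hξ₀ (by linarith) (by linarith)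

theorem setLIntegral_Ioc_ofReal_const_mul_rpow {a b C r : ℝ} (ha : 0 < a) (hab : a ≤ b)
    (hC : 0 ≤ C) :
    ∫⁻ ξ in Ioc a b, ENNReal.ofReal (C * ξ ^ r) = ENNReal.ofReal (C * ∫ ξ in a..b, ξ ^ r) := by
  have hint : IntegrableOn (fun ξ : ℝ => C * ξ ^ r) (Ioc a b) :=
    ((intervalIntegral.intervalIntegrable_rpow (Or.inr (by
      rw [uIcc_of_le hab]; exact fun h => ha.not_ge h.1))).const_mul C).1
  rw [intervalIntegral.integral_of_le hab, ← integral_const_mul,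
    ofReal_integral_eq_lintegral_ofReal hint]
  filter_upwards [ae_restrict_mem measurableSet_Ioc] with ξ hξ
  exact mul_nonneg hC (rpow_nonneg (ha.trans hξ.1).le _)

theorem setLIntegral_Ioi_ofReal_rpow_sub_one {a p : ℝ} (ha : 0 < a) (hp : p < 0) :
    ∫⁻ ξ in Ioi a, ENNReal.ofReal (ξ ^ (p - 1)) = ENNReal.ofReal (a ^ p / -p) := by
  rw [← ofReal_integral_eq_lintegral_ofReal (integrableOn_Ioi_rpow_of_lt (by linarith) ha),
    integral_Ioi_rpow_of_lt (by linarith) ha, sub_add_cancel, neg_div, div_neg]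
  filter_upwards [ae_restrict_mem measurableSet_Ioi] with ξ hξ
  exact rpow_nonneg (ha.trans hξ).le _

theorem Gint_le (hc : 0 < c) (hω : 0 < ω) (hα : 0 < α + 1) (hqα : q < α) (hn : 0 < n)
    {b : ℝ} (hb : 1 ≤ b) :
    Gint α c ω q n ≤ ENNReal.ofReal
      (((α + 1) / (4 * ω)) ^ ((α + 1) / 2) * (n : ℝ) ^ (-((α + 1) / 2)) *
          (c ^ (-((α + 1) / 2)) + ∫ ξ in (1 : ℝ)..b, ξ ^ (q - (α + 1) / 2)) +
        b ^ (q - α) / (α - q)) := by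
  set K := ((α + 1) / (4 * ω)) ^ ((α + 1) / 2) * (n : ℝ) ^ (-((α + 1) / 2))
  have hK : 0 ≤ K := by positivity
  have hsplit : Ioi (0 : ℝ) = Ioc 0 1 ∪ Ioc 1 b ∪ Ioi b := by
    rw [union_assoc, Ioc_union_Ioi_eq_Ioi hb, Ioc_union_Ioi_eq_Ioi zero_le_one]
  have h_near : ∫⁻ ξ in Ioc 0 1, ENNReal.ofReal (phiq q ξ * ⨆ s : Ici (0 : ℝ), gfun n α c ω ξ s)
      ≤ ENNReal.ofReal (K * c ^ (-((α + 1) / 2))) := by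
    calc _ ≤ ∫⁻ _ in Ioc (0 : ℝ) 1, ENNReal.ofReal (K * c ^ (-((α + 1) / 2))) :=
          setLIntegral_mono' measurableSet_Ioc fun ξ hξ => ENNReal.ofReal_le_ofReal
            (phiq_mul_iSup_gfun_le_of_le_one hn hξ hc hω hα)
      _ = _ := by simp
  have h_mid : ∫⁻ ξ in Ioc 1 b, ENNReal.ofReal (phiq q ξ * ⨆ s : Ici (0 : ℝ), gfun n α c ω ξ s)
      ≤ ENNReal.ofReal (K * ∫ ξ in (1 : ℝ)..b, ξ ^ (q - (α + 1) / 2)) :=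
    (setLIntegral_mono' measurableSet_Ioc fun ξ hξ => ENNReal.ofReal_le_ofReal
      (phiq_mul_iSup_gfun_le_decay hn hξ.1.le hc.le hω hα)).trans_eq
      (setLIntegral_Ioc_ofReal_const_mul_rpow one_pos hb hK)
  have h_tail : ∫⁻ ξ in Ioi b, ENNReal.ofReal (phiq q ξ * ⨆ s : Ici (0 : ℝ), gfun n α c ω ξ s)
      ≤ ENNReal.ofReal (b ^ (q - α) / (α - q)) := by
    calc _ ≤ ∫⁻ ξ in Ioi b, ENNReal.ofReal (ξ ^ (q - α - 1)) :=
          setLIntegral_mono' measurableSet_Ioi fun ξ hξ => ENNReal.ofReal_le_ofReal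
            (phiq_mul_iSup_gfun_le_rpow (hb.trans hξ.le) hc.le hω.le hα.le)
      _ = _ := by
          rw [setLIntegral_Ioi_ofReal_rpow_sub_one (by linarith) (by linarith), neg_sub]
  have h_int : 0 ≤ ∫ ξ in (1 : ℝ)..b, ξ ^ (q - (α + 1) / 2) :=
    intervalIntegral.integral_nonneg hb fun ξ hξ => rpow_nonneg (by linarith [hξ.1]) _
  unfold Gint
  rw [hsplit, lintegral_union measurableSet_Ioi
      (disjoint_union_left.2 ⟨Ioc_disjoint_Ioi hb, Ioc_disjoint_Ioi_same⟩),
    lintegral_union measurableSet_Ioc (Ioc_disjoint_Ioc_of_le le_rfl), mul_add,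
    ENNReal.ofReal_add (by positivity) (by positivity),
    ENNReal.ofReal_add (by positivity) (by positivity)]
  exact add_le_add (add_le_add h_near h_mid) h_tail

theorem exists_Gint_le_const (hc : 0 < c) (hω : 0 < ω) (hα : 0 < α + 1) (hqα : q < α) :
    ∃ C : ℝ, ∀ n : ℕ, 1 ≤ n → Gint α c ω q n ≤ ENNReal.ofReal C := by
  set A := ((α + 1) / (4 * ω)) ^ ((α + 1) / 2)
  refine ⟨A * c ^ (-((α + 1) / 2)) + 1 / (α - q), fun n hn => ?_⟩
  refine (Gint_le hc hω hα hqα hn le_rfl).trans (ENNReal.ofReal_le_ofReal ?_)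
  have hn₁ : (1 : ℝ) ≤ n := by exact_mod_cast hn
  have h_decay : (n : ℝ) ^ (-((α + 1) / 2)) ≤ 1 :=
    rpow_le_one_of_one_le_of_nonpos hn₁ (by linarith)
  rw [intervalIntegral.integral_same, add_zero, one_rpow, mul_right_comm]
  linarith [mul_le_of_le_one_right (by positivity : 0 ≤ A * c ^ (-((α + 1) / 2))) h_decay]

theorem exists_Gint_le_rpow_of_lt (hc : 0 < c) (hω : 0 < ω) (hα : 0 < α + 1) (hqα : q < α)
    (hα' : α < 2 * q + 1) :
    ∃ M : ℝ, 0 < M ∧ ∃ N : ℕ, ∀ n : ℕ, N ≤ n →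
      Gint α c ω q n ≤ ENNReal.ofReal (M * (n : ℝ) ^ (q - α)) := by
  set β := (α + 1) / 2 with hβ
  set A := ((α + 1) / (4 * ω)) ^ β
  have hr : 0 < q - β + 1 := by linarith
  have hd : 0 < 1 / (α - q) := one_div_pos.2 (sub_pos.2 hqα)
  refine ⟨A * c ^ (-β) + A / (q - β + 1) + 1 / (α - q), by positivity, 1, fun n hn => ?_⟩
  have hn₁ : (1 : ℝ) ≤ n := by exact_mod_cast hn
  have hn₀ : (0 : ℝ) < n := by linarith
  refine (Gint_le hc hω hα hqα hn hn₁).trans (ENNReal.ofReal_le_ofReal ?_)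
  have h_int : ∫ ξ in (1 : ℝ)..n, ξ ^ (q - β) ≤ (n : ℝ) ^ (q - β + 1) / (q - β + 1) := by
    rw [integral_rpow (Or.inl (by linarith)), one_rpow]
    gcongr
    linarith
  have h_exp : (n : ℝ) ^ (-β) * (n : ℝ) ^ (q - β + 1) = (n : ℝ) ^ (q - α) := by
    rw [← rpow_add hn₀]; congr 1; rw [hβ]; ring
  have h_near : A * (n : ℝ) ^ (-β) * c ^ (-β) ≤ A * c ^ (-β) * (n : ℝ) ^ (q - α) := by
    rw [mul_right_comm]
    exact mul_le_mul_of_nonneg_left (rpow_le_rpow_of_exponent_le hn₁ (by linarith))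
      (by positivity)
  have h_mid : A * (n : ℝ) ^ (-β) * ∫ ξ in (1 : ℝ)..n, ξ ^ (q - β) ≤
      A / (q - β + 1) * (n : ℝ) ^ (q - α) := by
    calc _ ≤ A * (n : ℝ) ^ (-β) * ((n : ℝ) ^ (q - β + 1) / (q - β + 1)) :=
          mul_le_mul_of_nonneg_left h_int (by positivity)
      _ = _ := by rw [← h_exp]; ring
  linear_combination h_near + h_mid

theorem exists_Gint_le_log_mul_rpow (hc : 0 < c) (hω : 0 < ω) (hα : 0 < α + 1)
    (hqα : q < α) (hα' : α = 2 * q + 1) :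
    ∃ M : ℝ, 0 < M ∧ ∃ N : ℕ, ∀ n : ℕ, N ≤ n →
      Gint α c ω q n ≤ ENNReal.ofReal (M * Real.log n * (n : ℝ) ^ (-(q + 1))) := by
  set β := (α + 1) / 2 with hβ
  set A := ((α + 1) / (4 * ω)) ^ β
  have hd : 0 < 1 / (α - q) := one_div_pos.2 (sub_pos.2 hqα)
  refine ⟨A * c ^ (-β) + A + 1 / (α - q), by positivity, 3, fun n hn => ?_⟩
  have hn₃ : (3 : ℝ) ≤ n := by exact_mod_cast hn
  have hn₀ : (0 : ℝ) < n := by linarith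
  refine (Gint_le hc hω hα hqα (by omega) (b := n) (by linarith)).trans
    (ENNReal.ofReal_le_ofReal ?_)
  have h_log : 1 ≤ Real.log n := by
    rw [le_log_iff_exp_le hn₀]
    linarith [exp_one_lt_d9]
  have h_int : ∫ ξ in (1 : ℝ)..n, ξ ^ (q - β) = Real.log n := by
    rw [show q - β = -1 by rw [hβ, hα']; ring]
    simp only [rpow_neg_one]
    rw [integral_inv_of_pos one_pos hn₀, div_one]
  have h_exp : (n : ℝ) ^ (-β) = (n : ℝ) ^ (-(q + 1)) := by rw [hβ, hα']; ring_nf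
  have h_exp' : (n : ℝ) ^ (q - α) = (n : ℝ) ^ (-(q + 1)) := by rw [hα']; ring_nf
  have h_pos : 0 ≤ (Real.log n - 1) * ((n : ℝ) ^ (-(q + 1)) * (A * c ^ (-β) + 1 / (α - q))) :=
    mul_nonneg (by linarith) (mul_nonneg (by positivity) (by positivity))
  rw [h_int, h_exp, h_exp']
  linear_combination h_pos

theorem exists_Gint_le_rpow_of_gt (hc : 0 < c) (hω : 0 < ω) (hα : 0 < α + 1) (hqα : q < α)
    (hα' : 2 * q + 1 < α) :
    ∃ M : ℝ, 0 < M ∧ ∃ N : ℕ, ∀ n : ℕ, N ≤ n →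
      Gint α c ω q n ≤ ENNReal.ofReal (M * (n : ℝ) ^ (-((α + 1) / 2))) := by
  set β := (α + 1) / 2 with hβ
  set A := ((α + 1) / (4 * ω)) ^ β
  have hr : 0 < β - q - 1 := by linarith
  have hd : 0 < α - q := sub_pos.2 hqα
  refine ⟨A * c ^ (-β) + A / (β - q - 1) + 1 / (α - q), by positivity, 1, fun n hn => ?_⟩
  have hn₁ : (1 : ℝ) ≤ n := by exact_mod_cast hn
  refine (Gint_le hc hω hα hqα hn hn₁).trans (ENNReal.ofReal_le_ofReal ?_)
  have h_int : ∫ ξ in (1 : ℝ)..n, ξ ^ (q - β) ≤ 1 / (β - q - 1) := by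
    rw [integral_rpow (Or.inr ⟨by linarith, by
      rw [uIcc_of_le hn₁]; exact fun h => zero_lt_one.not_ge h.1⟩), one_rpow,
      ← neg_div_neg_eq, neg_sub, show -(q - β + 1) = β - q - 1 by ring]
    gcongr
    linarith [rpow_nonneg (zero_le_one.trans hn₁) (q - β + 1)]
  have h_mid : A * (n : ℝ) ^ (-β) * ∫ ξ in (1 : ℝ)..n, ξ ^ (q - β) ≤
      A / (β - q - 1) * (n : ℝ) ^ (-β) := by
    calc _ ≤ A * (n : ℝ) ^ (-β) * (1 / (β - q - 1)) :=
          mul_le_mul_of_nonneg_left h_int (by positivity)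
      _ = _ := by ring
  have h_tail : (n : ℝ) ^ (q - α) / (α - q) ≤ (n : ℝ) ^ (-β) / (α - q) :=
    div_le_div_of_nonneg_right (rpow_le_rpow_of_exponent_le hn₁ (by linarith)) hd.le
  linear_combination h_mid + h_tail

end

/-- Lemma 3.7 (the `g` part): for `c, ω > 0` and `α > q > 0`, the quantities `G(n)` are
uniformly bounded in `n`, and as `n → ∞`:
`G(n) = O(n^{q-α})` if `q < α < 2q+1`, `G(n) = O(n^{-(q+1)} log n)` if `α = 2q+1`, and
`G(n) = O(n^{-(α+1)/2})` if `α > 2q+1`. -/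
theorem Gint_bounds
    (α c ω q : ℝ) (hc : 0 < c) (hω : 0 < ω) (hq : 0 < q) (hα : q < α) :
    (∃ C : ℝ, ∀ n : ℕ, 1 ≤ n → Gint α c ω q n ≤ ENNReal.ofReal C) ∧
    (α < 2 * q + 1 →
      ∃ M : ℝ, 0 < M ∧ ∃ N : ℕ, ∀ n : ℕ, N ≤ n →
        Gint α c ω q n ≤ ENNReal.ofReal (M * (n : ℝ) ^ (q - α))) ∧
    (α = 2 * q + 1 →
      ∃ M : ℝ, 0 < M ∧ ∃ N : ℕ, ∀ n : ℕ, N ≤ n →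
        Gint α c ω q n ≤ ENNReal.ofReal (M * Real.log (n : ℝ) * (n : ℝ) ^ (-(q + 1)))) ∧
    (2 * q + 1 < α →
      ∃ M : ℝ, 0 < M ∧ ∃ N : ℕ, ∀ n : ℕ, N ≤ n →
        Gint α c ω q n ≤ ENNReal.ofReal (M * (n : ℝ) ^ (-((α + 1) / 2)))) := by
  have hα₁ : 0 < α + 1 := by linarith
  exact ⟨exists_Gint_le_const hc hω hα₁ hα, exists_Gint_le_rpow_of_lt hc hω hα₁ hα,
    exists_Gint_le_log_mul_rpow hc hω hα₁ hα, exists_Gint_le_rpow_of_gt hc hω hα₁ hα⟩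

end
end

section
/- Let α > q > 0. For t ≥ 0 define the holomorphic function f_{t,α}(z) := e^{-t/(z+1)} (z+1)^{-α} on the right half-plane ℂ₊. Then sup_{t≥0} ⦀f_{t,α}⦀_q < ∞, and as t → ∞: ⦀f_{t,α}⦀_q = O(t^{q−α}) if q < α < 2q; ⦀f_{t,α}⦀_q = O(t^{-q} log t) if α = 2q; and ⦀f_{t,α}⦀_q = O(t^{-α/2}) if α > 2q. -/
open Filter Topology MeasureTheory

noncomputable section

/-- The weighted norm `⦀f⦀_q = ∫₀^∞ φ_q(ξ) sup_{η ∈ ℝ} |f'(ξ + iη)| dξ`, as an extended real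
number (so that finiteness is part of any upper bound). -/
def wnorm (q : ℝ) (f : ℂ → ℂ) : ENNReal :=
  ∫⁻ ξ in Set.Ioi (0 : ℝ),
    ENNReal.ofReal (phiq q ξ * ⨆ η : ℝ, ‖deriv f (ξ + η * Complex.I)‖)

/-- `f_{t,α}(z) = e^{-t/(z+1)} (z+1)^{-α}` (principal power). -/
def fInv (t α : ℝ) (z : ℂ) : ℂ :=
  Complex.exp (-(t : ℂ) / (z + 1)) * (z + 1) ^ (-(α : ℂ))

/-!
Write `w = z + 1`. Then `f'(z) = e^{-t/w} (t w^{-α-2} - α w^{-α-1})` and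
`|e^{-t/w}| = exp (-t Re w / |w|²)`. On the line `Re z = ξ` we have `|w| ≥ 1 + ξ`, and the
elementary bound `s^m e^{-s} ≤ m^m e^{-m}`, applied with `s = t (1 + ξ) / |w|²`, trades powers
of `t` for powers of `1 + ξ`: for `0 ≤ n ≤ α/2`, `sup_η |f'(ξ + iη)| ≤ K t^{-n} (1 + ξ)^{n-α-1}`.
Taking `n = 0` gives the uniform bound, and `n = α/2` on all of `(0, ∞)` gives `t^{-α/2}` when
`α > 2q`. When `α ≤ 2q` we take `n = α/2` on `(0, t]` and `n = 0` on `(t, ∞)`; the first piece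
contributes `t^{-α/2} ∫₀^t (1 + ξ)^{q-α/2-1} dξ`, which is `O(t^{q-α})` for `α < 2q` and
`O(t^{-q} log t)` for `α = 2q`.
-/

open Set

lemma ofReal_add_ofReal_le_ofReal_add {a b c d : ℝ} (hc : 0 ≤ c) (hd : 0 ≤ d) (hac : a ≤ c)
    (hbd : b ≤ d) : ENNReal.ofReal a + ENNReal.ofReal b ≤ ENNReal.ofReal (c + d) := by
  rw [ENNReal.ofReal_add hc hd]
  exact add_le_add (ENNReal.ofReal_le_ofReal hac) (ENNReal.ofReal_le_ofReal hbd)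

/-- The maximum of `s ↦ s ^ m * exp (-s)` on `[0, ∞)`, attained at `s = m`. -/
def expPeak (m : ℝ) : ℝ := m ^ m * Real.exp (-m)

lemma expPeak_nonneg {m : ℝ} (hm : 0 ≤ m) : 0 ≤ expPeak m := by
  unfold expPeak; positivity

lemma rpow_mul_exp_neg_le_expPeak {s m : ℝ} (hs : 0 ≤ s) (hm : 0 ≤ m) :
    s ^ m * Real.exp (-s) ≤ expPeak m := by
  rcases hm.eq_or_lt with rfl | hm
  · simpa [expPeak] using hs
  rcases hs.eq_or_lt with rfl | hs
  · rw [Real.zero_rpow hm.ne', zero_mul]; exact expPeak_nonneg hm.le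
  have hlog : Real.log (s / m) ≤ s / m - 1 := Real.log_le_sub_one_of_pos (by positivity)
  rw [Real.log_div hs.ne' hm.ne'] at hlog
  have key : Real.log s * m - s ≤ Real.log m * m - m := by
    have := mul_le_mul_of_nonneg_left hlog hm.le
    rw [mul_sub, mul_sub, mul_div_cancel₀ _ hm.ne', mul_one] at this
    linarith
  rw [expPeak, Real.rpow_def_of_pos hs, Real.rpow_def_of_pos hm, ← Real.exp_add, ← Real.exp_add]
  exact Real.exp_le_exp.mpr (by linarith)

lemma rpow_mul_exp_neg_div_sq_mul_rpow_le {t u r m β : ℝ} (ht : 0 ≤ t) (hu : 0 < u) (hur : u ≤ r)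
    (hm : 0 ≤ m) (hmβ : 2 * m ≤ β) :
    t ^ m * Real.exp (-(t * u / r ^ 2)) * r ^ (-β) ≤ expPeak m * u ^ (m - β) := by
  have hr : 0 < r := hu.trans_le hur
  set s := t * u / r ^ 2
  have hts : t = s * (r ^ 2 / u) := by simp only [s]; field_simp
  have htm : t ^ m = s ^ m * (r ^ (2 * m) * u ^ (-m)) := by
    rw [hts, Real.mul_rpow (by positivity) (by positivity), Real.div_rpow (by positivity) hu.le,
      Real.rpow_neg hu.le, ← Real.rpow_natCast_mul hr.le]
    push_cast; ring
  calc t ^ m * Real.exp (-s) * r ^ (-β)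
      = s ^ m * Real.exp (-s) * (u ^ (-m) * r ^ (2 * m - β)) := by
        rw [htm, Real.rpow_sub hr, Real.rpow_neg hr.le]; ring
    _ ≤ expPeak m * (u ^ (-m) * u ^ (2 * m - β)) := by
        refine mul_le_mul (rpow_mul_exp_neg_le_expPeak (by positivity) hm)
          (mul_le_mul_of_nonneg_left (Real.rpow_le_rpow_of_nonpos hu hur (by linarith))
            (by positivity)) (by positivity) (expPeak_nonneg hm)
    _ = expPeak m * u ^ (m - β) := by
        rw [← Real.rpow_add hu]; ring_nf

lemma hasDerivAt_fInv (t α : ℝ) {z : ℂ} (hz : 0 < (z + 1).re) :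
    HasDerivAt (fInv t α) (Complex.exp (-t / (z + 1)) *
      (t * (z + 1) ^ (-α - 2 : ℂ) - α * (z + 1) ^ (-α - 1 : ℂ))) z := by
  have hz0 : z + 1 ≠ 0 := fun h => by simp [h] at hz
  have hw : HasDerivAt (fun z : ℂ => z + 1) 1 z := (hasDerivAt_id z).add_const 1
  have hexp : HasDerivAt (fun z : ℂ => Complex.exp (-t / (z + 1)))
      (Complex.exp (-t / (z + 1)) * (t / (z + 1) ^ 2)) z := by
    refine (((hasDerivAt_const z (-(t : ℂ))).div hw hz0).cexp).congr_deriv ?_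
    simp only [Pi.div_apply]
    ring
  have hpow : HasDerivAt (fun z : ℂ => (z + 1) ^ (-(α : ℂ)))
      (-α * (z + 1) ^ (-α - 1 : ℂ) * 1) z := hw.cpow_const (Or.inl hz)
  have hcpow_sub_one : (z + 1) ^ (-α - 1 : ℂ) = (z + 1) ^ (-(α : ℂ)) / (z + 1) := by
    rw [Complex.cpow_sub _ _ hz0, Complex.cpow_one]
  have hcpow_sub_two : (z + 1) ^ (-α - 2 : ℂ) = (z + 1) ^ (-(α : ℂ)) / (z + 1) ^ 2 := by
    rw [Complex.cpow_sub _ _ hz0, show (2 : ℂ) = (2 : ℕ) by norm_num, Complex.cpow_natCast]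
  refine (hexp.mul hpow).congr_deriv ?_
  rw [hcpow_sub_one, hcpow_sub_two]
  field_simp
  ring

lemma norm_deriv_fInv_le {t α : ℝ} (ht : 0 ≤ t) (hα : 0 ≤ α) {z : ℂ} (hz : 0 < (z + 1).re) :
    ‖deriv (fInv t α) z‖ ≤ Real.exp (-(t * (z + 1).re / ‖z + 1‖ ^ 2)) *
      (t * ‖z + 1‖ ^ (-(α + 2)) + α * ‖z + 1‖ ^ (-(α + 1))) := by
  have hz0 : z + 1 ≠ 0 := fun h => by simp [h] at hz
  have hnorm_cpow (c : ℝ) : ‖(z + 1) ^ (-α - c : ℂ)‖ = ‖z + 1‖ ^ (-(α + c)) := by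
    rw [Complex.norm_cpow_of_ne_zero hz0]
    simp only [Complex.sub_re, Complex.neg_re, Complex.ofReal_re, Complex.sub_im, Complex.neg_im,
      Complex.ofReal_im, sub_zero, neg_zero, mul_zero, Real.exp_zero, div_one]
    ring_nf
  have hnorm_exp : ‖Complex.exp (-t / (z + 1))‖ = Real.exp (-(t * (z + 1).re / ‖z + 1‖ ^ 2)) := by
    rw [Complex.norm_exp, div_eq_mul_inv, Complex.mul_re, Complex.inv_re, Complex.inv_im,
      Complex.normSq_eq_norm_sq]
    simp only [Complex.neg_re, Complex.ofReal_re, Complex.add_re, Complex.one_re, neg_mul,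
      Complex.neg_im, Complex.ofReal_im, neg_zero, Complex.add_im, Complex.one_im, add_zero,
      zero_mul, sub_zero, Real.exp_eq_exp, neg_inj]
    ring
  rw [(hasDerivAt_fInv t α hz).deriv, norm_mul, hnorm_exp]
  refine mul_le_mul_of_nonneg_left ((norm_sub_le _ _).trans_eq ?_) (Real.exp_nonneg _)
  rw [norm_mul, norm_mul, Complex.norm_real, Complex.norm_real, Real.norm_of_nonneg ht,
    Real.norm_of_nonneg hα, ← hnorm_cpow 2, ← hnorm_cpow 1]
  norm_num

def fInvDerivConst (α n : ℝ) : ℝ := expPeak (n + 1) + α * expPeak n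

lemma fInvDerivConst_pos {α n : ℝ} (hα : 0 ≤ α) (hn : 0 ≤ n) : 0 < fInvDerivConst α n := by
  have : 0 < expPeak (n + 1) := by unfold expPeak; positivity
  have := expPeak_nonneg hn
  unfold fInvDerivConst; positivity

lemma rpow_mul_norm_deriv_fInv_le {t α n : ℝ} (ht : 0 ≤ t) (hα : 0 ≤ α) (hn : 0 ≤ n)
    (hnα : 2 * n ≤ α) {z : ℂ} (hz : 0 < (z + 1).re) :
    t ^ n * ‖deriv (fInv t α) z‖ ≤
      fInvDerivConst α n * (z + 1).re ^ (n - α - 1) := by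
  set u := (z + 1).re
  set r := ‖z + 1‖
  set E := Real.exp (-(t * u / r ^ 2))
  have hur : u ≤ r := Complex.re_le_norm _
  calc t ^ n * ‖deriv (fInv t α) z‖
      ≤ t ^ n * (E * (t * r ^ (-(α + 2)) + α * r ^ (-(α + 1)))) :=
        mul_le_mul_of_nonneg_left (norm_deriv_fInv_le ht hα hz) (by positivity)
    _ = t ^ (n + 1) * E * r ^ (-(α + 2)) + α * (t ^ n * E * r ^ (-(α + 1))) := by
        rw [Real.rpow_add_one' ht (by linarith)]; ring
    _ ≤ expPeak (n + 1) * u ^ (n + 1 - (α + 2)) + α * (expPeak n * u ^ (n - (α + 1))) := by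
        refine add_le_add ?_ (mul_le_mul_of_nonneg_left ?_ hα)
        · exact rpow_mul_exp_neg_div_sq_mul_rpow_le ht hz hur (by linarith) (by linarith)
        · exact rpow_mul_exp_neg_div_sq_mul_rpow_le ht hz hur hn (by linarith)
    _ = _ := by
        unfold fInvDerivConst
        rw [show n + 1 - (α + 2) = n - α - 1 by ring, show n - (α + 1) = n - α - 1 by ring]; ring

lemma rpow_mul_iSup_norm_deriv_fInv_le {t α n : ℝ} (ht : 0 ≤ t) (hα : 0 ≤ α) (hn : 0 ≤ n)
    (hnα : 2 * n ≤ α) {ξ : ℝ} (hξ : -1 < ξ) :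
    t ^ n * ⨆ η : ℝ, ‖deriv (fInv t α) (ξ + η * Complex.I)‖ ≤
      fInvDerivConst α n * (1 + ξ) ^ (n - α - 1) := by
  rw [Real.mul_iSup_of_nonneg (by positivity)]
  refine ciSup_le fun η => ?_
  have hre : ((ξ : ℂ) + η * Complex.I + 1).re = 1 + ξ := by
    simp only [Complex.add_re, Complex.ofReal_re, Complex.mul_re, Complex.I_re, mul_zero,
      Complex.ofReal_im, Complex.I_im, mul_one, sub_self, add_zero, Complex.one_re]
    ring
  rw [← hre]
  exact rpow_mul_norm_deriv_fInv_le ht hα hn hnα (by rw [hre]; linarith)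

lemma iSup_norm_deriv_fInv_le {t α n : ℝ} (ht : 0 < t) (hα : 0 ≤ α) (hn : 0 ≤ n)
    (hnα : 2 * n ≤ α) {ξ : ℝ} (hξ : -1 < ξ) :
    ⨆ η : ℝ, ‖deriv (fInv t α) (ξ + η * Complex.I)‖ ≤
      fInvDerivConst α n * t ^ (-n) * (1 + ξ) ^ (n - α - 1) := by
  calc _ ≤ fInvDerivConst α n * (1 + ξ) ^ (n - α - 1) / t ^ n :=
        (le_div_iff₀' (by positivity)).2 (rpow_mul_iSup_norm_deriv_fInv_le ht.le hα hn hnα hξ)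
    _ = _ := by rw [Real.rpow_neg ht.le]; ring

lemma iSup_norm_deriv_fInv_le_of_nonneg {t α : ℝ} (ht : 0 ≤ t) (hα : 0 ≤ α) {ξ : ℝ}
    (hξ : -1 < ξ) :
    ⨆ η : ℝ, ‖deriv (fInv t α) (ξ + η * Complex.I)‖ ≤ fInvDerivConst α 0 * (1 + ξ) ^ (-α - 1) := by
  simpa only [Real.rpow_zero, one_mul, zero_sub] using
    rpow_mul_iSup_norm_deriv_fInv_le ht hα le_rfl (by linarith) hξ

lemma phiq_le_one_add_rpow {q ξ : ℝ} (hq : 0 ≤ q) (hξ : 0 ≤ ξ) : phiq q ξ ≤ (1 + ξ) ^ q := by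
  unfold phiq
  split_ifs
  · exact Real.one_le_rpow (by linarith) hq
  · exact Real.rpow_le_rpow (by linarith) (by linarith) hq

lemma setLIntegral_phiq_mul_iSup_le {q c p : ℝ} (hq : 0 ≤ q) {f : ℂ → ℂ} {s : Set ℝ}
    (hs : MeasurableSet s) (hs0 : s ⊆ Ioi 0)
    (hf : ∀ ξ ∈ s, ⨆ η : ℝ, ‖deriv f (ξ + η * Complex.I)‖ ≤ c * (1 + ξ) ^ p) :
    ∫⁻ ξ in s, ENNReal.ofReal (phiq q ξ * ⨆ η : ℝ, ‖deriv f (ξ + η * Complex.I)‖) ≤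
      ENNReal.ofReal c * ∫⁻ ξ in s, ENNReal.ofReal ((1 + ξ) ^ (q + p)) := by
  rw [← lintegral_const_mul' _ _ ENNReal.ofReal_ne_top]
  refine setLIntegral_mono' hs fun ξ hξ => ?_
  have hξ0 : 0 < ξ := hs0 hξ
  rw [← ENNReal.ofReal_mul' (by positivity), Real.rpow_add (by linarith)]
  refine ENNReal.ofReal_le_ofReal ?_
  calc phiq q ξ * ⨆ η : ℝ, ‖deriv f (ξ + η * Complex.I)‖
      ≤ (1 + ξ) ^ q * (c * (1 + ξ) ^ p) :=
        mul_le_mul (phiq_le_one_add_rpow hq hξ0.le) (hf ξ hξ)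
          (Real.iSup_nonneg fun _ => norm_nonneg _) (by positivity)
    _ = _ := by ring

lemma setLIntegral_Ioi_rpow {c p : ℝ} (hc : 0 < c) (hp : p < -1) :
    ∫⁻ u in Ioi c, ENNReal.ofReal (u ^ p) = ENNReal.ofReal (c ^ (p + 1) / (-p - 1)) := by
  have hnonneg : 0 ≤ᵐ[volume.restrict (Ioi c)] fun u : ℝ => u ^ p :=
    (ae_restrict_iff' measurableSet_Ioi).2
      (ae_of_all _ fun u hu => Real.rpow_nonneg (hc.trans hu).le p)
  rw [← ofReal_integral_eq_lintegral_ofReal (integrableOn_Ioi_rpow_of_lt hp hc) hnonneg,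
    integral_Ioi_rpow_of_lt hp hc, neg_div, ← div_neg, neg_add']

lemma setLIntegral_Ioc_rpow {a b p : ℝ} (ha : 0 < a) (hab : a ≤ b) :
    ∫⁻ u in Ioc a b, ENNReal.ofReal (u ^ p) = ENNReal.ofReal (∫ u in a..b, u ^ p) := by
  have hint : IntegrableOn (fun u : ℝ => u ^ p) (Ioc a b) :=
    (intervalIntegral.intervalIntegrable_rpow (Or.inr (notMem_uIcc_of_lt ha (ha.trans_le hab)))).1
  have hnonneg : 0 ≤ᵐ[volume.restrict (Ioc a b)] fun u : ℝ => u ^ p :=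
    (ae_restrict_iff' measurableSet_Ioc).2
      (ae_of_all _ fun u hu => Real.rpow_nonneg (ha.trans hu.1).le p)
  rw [intervalIntegral.integral_of_le hab, ofReal_integral_eq_lintegral_ofReal hint hnonneg]

lemma setLIntegral_comp_one_add (g : ℝ → ENNReal) (s : Set ℝ) :
    ∫⁻ ξ in (1 + ·) ⁻¹' s, g (1 + ξ) = ∫⁻ u in s, g u :=
  (measurePreserving_add_left volume (1 : ℝ)).setLIntegral_comp_preimage_emb
    (measurableEmbedding_addLeft 1) g s

lemma setLIntegral_Ioi_one_add_rpow {c p : ℝ} (hc : -1 < c) (hp : p < -1) :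
    ∫⁻ ξ in Ioi c, ENNReal.ofReal ((1 + ξ) ^ p) =
      ENNReal.ofReal ((1 + c) ^ (p + 1) / (-p - 1)) := by
  have h := setLIntegral_comp_one_add (fun u => ENNReal.ofReal (u ^ p)) (Ioi (1 + c))
  rw [preimage_const_add_Ioi, add_sub_cancel_left] at h
  rw [h, setLIntegral_Ioi_rpow (by linarith) hp]

lemma setLIntegral_Ioc_one_add_rpow {T p : ℝ} (hT : 0 ≤ T) :
    ∫⁻ ξ in Ioc 0 T, ENNReal.ofReal ((1 + ξ) ^ p) =
      ENNReal.ofReal (∫ u in (1 : ℝ)..1 + T, u ^ p) := by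
  have h := setLIntegral_comp_one_add (fun u => ENNReal.ofReal (u ^ p)) (Ioc 1 (1 + T))
  rw [preimage_const_add_Ioc, sub_self, add_sub_cancel_left] at h
  rw [h, setLIntegral_Ioc_rpow one_pos (by linarith)]

lemma integral_one_rpow_le {b p : ℝ} (hp : -1 < p) :
    ∫ u in (1 : ℝ)..b, u ^ p ≤ b ^ (p + 1) / (p + 1) := by
  rw [integral_rpow (Or.inl hp), Real.one_rpow]
  exact div_le_div_of_nonneg_right (by linarith) (by linarith)

lemma integral_one_rpow_neg_one {b : ℝ} (hb : 0 < b) :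
    ∫ u in (1 : ℝ)..b, u ^ (-1 : ℝ) = Real.log b := by
  simp only [Real.rpow_neg_one]
  rw [integral_inv_of_pos one_pos hb, div_one]

lemma wnorm_le_of_iSup_le {q c p : ℝ} (hq : 0 ≤ q) (hp : q + p < -1) {f : ℂ → ℂ}
    (hf : ∀ ξ ∈ Ioi (0 : ℝ), ⨆ η : ℝ, ‖deriv f (ξ + η * Complex.I)‖ ≤ c * (1 + ξ) ^ p) :
    wnorm q f ≤ ENNReal.ofReal (c / (-(q + p) - 1)) := by
  calc wnorm q f ≤ ENNReal.ofReal c * ∫⁻ ξ in Ioi 0, ENNReal.ofReal ((1 + ξ) ^ (q + p)) :=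
        setLIntegral_phiq_mul_iSup_le hq measurableSet_Ioi subset_rfl hf
    _ = ENNReal.ofReal c * ENNReal.ofReal (1 / (-(q + p) - 1)) := by
        rw [setLIntegral_Ioi_one_add_rpow (by norm_num) hp, add_zero, Real.one_rpow]
    _ ≤ ENNReal.ofReal (c / (-(q + p) - 1)) := by
        rw [← ENNReal.ofReal_mul' (by rw [one_div_nonneg]; linarith), mul_one_div]

lemma wnorm_le_of_iSup_le_Ioc_Ioi {q c₁ c₂ p₁ p₂ T : ℝ} (hq : 0 ≤ q) (hT : 0 ≤ T)
    (hp₂ : q + p₂ < -1) {f : ℂ → ℂ}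
    (hf₁ : ∀ ξ ∈ Ioc 0 T, ⨆ η : ℝ, ‖deriv f (ξ + η * Complex.I)‖ ≤ c₁ * (1 + ξ) ^ p₁)
    (hf₂ : ∀ ξ ∈ Ioi T, ⨆ η : ℝ, ‖deriv f (ξ + η * Complex.I)‖ ≤ c₂ * (1 + ξ) ^ p₂) :
    wnorm q f ≤ ENNReal.ofReal (c₁ * ∫ u in (1 : ℝ)..1 + T, u ^ (q + p₁)) +
      ENNReal.ofReal (c₂ * ((1 + T) ^ (q + p₂ + 1) / (-(q + p₂) - 1))) := by
  have hhead := setLIntegral_phiq_mul_iSup_le hq measurableSet_Ioc Ioc_subset_Ioi_self hf₁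
  have htail := setLIntegral_phiq_mul_iSup_le hq measurableSet_Ioi (Ioi_subset_Ioi hT) hf₂
  rw [setLIntegral_Ioc_one_add_rpow hT] at hhead
  rw [setLIntegral_Ioi_one_add_rpow (by linarith) hp₂] at htail
  rw [wnorm, ← Ioc_union_Ioi_eq_Ioi hT]
  refine (lintegral_union_le _ _ _).trans (add_le_add ?_ ?_)
  · rwa [ENNReal.ofReal_mul' (intervalIntegral.integral_nonneg (by linarith)
      fun u hu => Real.rpow_nonneg (by linarith [hu.1]) _)]
  · rwa [ENNReal.ofReal_mul' (div_nonneg (Real.rpow_nonneg (by linarith) _) (by linarith))]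

lemma wnorm_fInv_le {q α t : ℝ} (hq : 0 ≤ q) (hqα : q < α) (ht : 0 ≤ t) :
    wnorm q (fInv t α) ≤ ENNReal.ofReal (fInvDerivConst α 0 / (α - q)) := by
  have h := wnorm_le_of_iSup_le (f := fInv t α) hq (by linarith) fun ξ hξ =>
    iSup_norm_deriv_fInv_le_of_nonneg ht (by linarith) (by linarith [mem_Ioi.1 hξ])
  rwa [show -(q + (-α - 1)) - 1 = α - q by ring] at h

lemma wnorm_fInv_le_rpow_neg_half {q α t : ℝ} (hq : 0 ≤ q) (hqα : 2 * q < α) (ht : 0 < t) :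
    wnorm q (fInv t α) ≤
      ENNReal.ofReal (fInvDerivConst α (α / 2) / (α / 2 - q) * t ^ (-(α / 2))) := by
  have h := wnorm_le_of_iSup_le (f := fInv t α) (p := α / 2 - α - 1) hq (by linarith)
    fun ξ hξ => iSup_norm_deriv_fInv_le ht (by linarith) (by linarith) (by linarith)
      (by linarith [mem_Ioi.1 hξ])
  rw [show -(q + (α / 2 - α - 1)) - 1 = α / 2 - q by ring] at h
  exact h.trans_eq (by ring_nf)

lemma wnorm_fInv_le_head_add_tail {q α t : ℝ} (hq : 0 ≤ q) (hqα : q < α) (ht : 0 < t) :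
    wnorm q (fInv t α) ≤
      ENNReal.ofReal (fInvDerivConst α (α / 2) * t ^ (-(α / 2)) *
        ∫ u in (1 : ℝ)..1 + t, u ^ (q - α / 2 - 1)) +
      ENNReal.ofReal (fInvDerivConst α 0 / (α - q) * t ^ (q - α)) := by
  have h := wnorm_le_of_iSup_le_Ioc_Ioi (f := fInv t α) (p₁ := α / 2 - α - 1)
    (p₂ := -α - 1) hq ht.le (by linarith)
    (fun ξ hξ => iSup_norm_deriv_fInv_le (n := α / 2) ht (by linarith) (by linarith)
      (by linarith) (by linarith [hξ.1]))
    (fun ξ hξ => iSup_norm_deriv_fInv_le_of_nonneg ht.le (by linarith)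
      (by linarith [mem_Ioi.1 hξ]))
  refine h.trans (add_le_add (le_of_eq (by ring_nf)) (ENNReal.ofReal_le_ofReal ?_))
  have hK : 0 ≤ fInvDerivConst α 0 / (α - q) :=
    div_nonneg (fInvDerivConst_pos (by linarith) le_rfl).le (by linarith)
  calc fInvDerivConst α 0 * ((1 + t) ^ (q + (-α - 1) + 1) / (-(q + (-α - 1)) - 1))
      = fInvDerivConst α 0 / (α - q) * (1 + t) ^ (q - α) := by ring_nf
    _ ≤ fInvDerivConst α 0 / (α - q) * t ^ (q - α) :=
        mul_le_mul_of_nonneg_left (Real.rpow_le_rpow_of_nonpos ht (by linarith) (by linarith)) hK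

lemma wnorm_fInv_le_rpow_sub {q α t : ℝ} (hq : 0 ≤ q) (hqα : q < α) (hα : α < 2 * q)
    (ht : 1 ≤ t) :
    wnorm q (fInv t α) ≤ ENNReal.ofReal ((fInvDerivConst α (α / 2) * 2 ^ (q - α / 2) /
      (q - α / 2) + fInvDerivConst α 0 / (α - q)) * t ^ (q - α)) := by
  have ht0 : 0 < t := by linarith
  have he : 0 < q - α / 2 := by linarith
  have hK₀ : 0 < fInvDerivConst α 0 := fInvDerivConst_pos (by linarith) le_rfl
  have hK : 0 < fInvDerivConst α (α / 2) := fInvDerivConst_pos (by linarith) (by linarith)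
  have hint : ∫ u in (1 : ℝ)..1 + t, u ^ (q - α / 2 - 1) ≤ (2 * t) ^ (q - α / 2) / (q - α / 2) :=
    calc _ ≤ (1 + t) ^ (q - α / 2) / (q - α / 2) := by
          simpa only [sub_add_cancel] using
            integral_one_rpow_le (b := 1 + t) (p := q - α / 2 - 1) (by linarith)
      _ ≤ (2 * t) ^ (q - α / 2) / (q - α / 2) := by gcongr; linarith
  have hhead : fInvDerivConst α (α / 2) * t ^ (-(α / 2)) *
      ∫ u in (1 : ℝ)..1 + t, u ^ (q - α / 2 - 1) ≤
      fInvDerivConst α (α / 2) * 2 ^ (q - α / 2) / (q - α / 2) * t ^ (q - α) :=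
    calc _ ≤ fInvDerivConst α (α / 2) * t ^ (-(α / 2)) * ((2 * t) ^ (q - α / 2) / (q - α / 2)) :=
          mul_le_mul_of_nonneg_left hint (by positivity)
      _ = _ := by
          have : t ^ (-(α / 2)) * t ^ (q - α / 2) = t ^ (q - α) := by
            rw [← Real.rpow_add ht0]; ring_nf
          rw [Real.mul_rpow zero_le_two ht0.le, ← this]; ring
  refine (wnorm_fInv_le_head_add_tail hq hqα ht0).trans
    ((ofReal_add_ofReal_le_ofReal_add ?_ ?_ hhead le_rfl).trans_eq (by rw [add_mul]))
  · positivity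
  · have : 0 < α - q := by linarith
    positivity

lemma wnorm_fInv_two_mul_le_rpow_neg_mul_log {q t : ℝ} (hq : 0 < q) (ht : 3 ≤ t) :
    wnorm q (fInv t (2 * q)) ≤ ENNReal.ofReal ((2 * fInvDerivConst (2 * q) q +
      fInvDerivConst (2 * q) 0 / q) * t ^ (-q) * Real.log t) := by
  have ht0 : 0 < t := by linarith
  have hlog : 1 ≤ Real.log t := by
    rw [Real.le_log_iff_exp_le ht0]
    linarith [Real.exp_one_lt_d9]
  have hlog_add : Real.log (1 + t) ≤ 2 * Real.log t := by
    rw [← Real.log_rpow ht0, Real.rpow_two]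
    exact Real.log_le_log (by linarith) (by nlinarith)
  have hK₀ : 0 < fInvDerivConst (2 * q) 0 := fInvDerivConst_pos (by linarith) le_rfl
  have hK : 0 < fInvDerivConst (2 * q) q := fInvDerivConst_pos (by linarith) hq.le
  have h := wnorm_fInv_le_head_add_tail hq.le (by linarith : q < 2 * q) ht0
  rw [show 2 * q / 2 = q by ring, show q - q - 1 = -1 by ring, show 2 * q - q = q by ring,
    show q - 2 * q = -q by ring, integral_one_rpow_neg_one (by linarith)] at h
  have hX : 0 < t ^ (-q) := Real.rpow_pos_of_pos ht0 _
  refine h.trans ((ofReal_add_ofReal_le_ofReal_add (c := 2 * fInvDerivConst (2 * q) q *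
    t ^ (-q) * Real.log t) (d := fInvDerivConst (2 * q) 0 / q * t ^ (-q) * Real.log t)
      (by positivity) (by positivity) ?_ ?_).trans_eq (by congr 1; ring))
  · calc fInvDerivConst (2 * q) q * t ^ (-q) * Real.log (1 + t)
        ≤ fInvDerivConst (2 * q) q * t ^ (-q) * (2 * Real.log t) := by gcongr
      _ = _ := by ring
  · calc fInvDerivConst (2 * q) 0 / q * t ^ (-q)
        = fInvDerivConst (2 * q) 0 / q * t ^ (-q) * 1 := (mul_one _).symm
      _ ≤ _ := by gcongr

/-- Proposition 3.11: for `α > q > 0`, `sup_{t ≥ 0} ⦀f_{t,α}⦀_q < ∞` and, as `t → ∞`,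
`⦀f_{t,α}⦀_q = O(t^{q-α})` if `q < α < 2q`, `⦀f_{t,α}⦀_q = O(t^{-q} log t)` if `α = 2q`,
and `⦀f_{t,α}⦀_q = O(t^{-α/2})` if `α > 2q`. -/
theorem wnorm_fInv_bounds (α q : ℝ) (hq : 0 < q) (hα : q < α) :
    (∃ C : ℝ, ∀ t : ℝ, 0 ≤ t → wnorm q (fInv t α) ≤ ENNReal.ofReal C) ∧
    (α < 2 * q →
      ∃ M : ℝ, 0 < M ∧ ∃ t₀ : ℝ, ∀ t : ℝ, t₀ ≤ t →
        wnorm q (fInv t α) ≤ ENNReal.ofReal (M * t ^ (q - α))) ∧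
    (α = 2 * q →
      ∃ M : ℝ, 0 < M ∧ ∃ t₀ : ℝ, ∀ t : ℝ, t₀ ≤ t →
        wnorm q (fInv t α) ≤ ENNReal.ofReal (M * t ^ (-q) * Real.log t)) ∧
    (2 * q < α →
      ∃ M : ℝ, 0 < M ∧ ∃ t₀ : ℝ, ∀ t : ℝ, t₀ ≤ t →
        wnorm q (fInv t α) ≤ ENNReal.ofReal (M * t ^ (-(α / 2)))) := by
  have hK₀ : 0 < fInvDerivConst α 0 := fInvDerivConst_pos (by linarith) le_rfl
  have hK : 0 < fInvDerivConst α (α / 2) := fInvDerivConst_pos (by linarith) (by linarith)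
  refine ⟨⟨_, fun t ht => wnorm_fInv_le hq.le hα ht⟩, fun hα2 => ?_, fun hα2 => ?_,
    fun hα2 => ?_⟩
  · have : 0 < q - α / 2 := by linarith
    have : 0 < α - q := by linarith
    exact ⟨_, by positivity, 1, fun t ht => wnorm_fInv_le_rpow_sub hq.le hα hα2 ht⟩
  · subst hα2
    have : 0 < fInvDerivConst (2 * q) q := fInvDerivConst_pos (by linarith) hq.le
    exact ⟨_, by positivity, 3, fun t ht => wnorm_fInv_two_mul_le_rpow_neg_mul_log hq ht⟩
  · have : 0 < α / 2 - q := by linarith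
    exact ⟨_, by positivity, 1, fun t ht =>
      wnorm_fInv_le_rpow_neg_half hq.le hα2 (by linarith)⟩

end
end

section
/- Let a, b ∈ ℝ satisfy |b| ≤ a, and let 0 ≤ δ ≤ 1. Then for all r > 0, (r² + 2δbr + b²)/(r² + 2δar + a²) ≤ ((r + δ|b|)/(r + δa))². -/
/-! For `c = |b|` the numerator only grows when `b` is replaced by `c`, since `δ r ≥ 0`.
In the case `0 ≤ c ≤ a`, clearing denominators leaves the difference
`(1 - δ²)(a - c) r (2δac + r(a + c))`, a product of nonnegative factors. -/

lemma sq_add_two_mul_add_sq_le_abs {δ r : ℝ} (hδ : 0 ≤ δ) (hr : 0 ≤ r) (b : ℝ) :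
    r ^ 2 + 2 * δ * b * r + b ^ 2 ≤ r ^ 2 + 2 * δ * |b| * r + |b| ^ 2 := by
  have hδr : 0 ≤ δ * r := mul_nonneg hδ hr
  nlinarith [le_abs_self b, sq_abs b]

lemma sq_mul_sub_mul_sq_eq (a c δ r : ℝ) :
    (r + δ * c) ^ 2 * (r ^ 2 + 2 * δ * a * r + a ^ 2) -
        (r ^ 2 + 2 * δ * c * r + c ^ 2) * (r + δ * a) ^ 2 =
      (1 - δ ^ 2) * (a - c) * r * (2 * δ * a * c + r * (a + c)) := by
  ring

lemma div_le_sq_div_of_le {a c δ r : ℝ} (hc : 0 ≤ c) (hca : c ≤ a) (hδ0 : 0 ≤ δ)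
    (hδ1 : δ ≤ 1) (hr : 0 < r) :
    (r ^ 2 + 2 * δ * c * r + c ^ 2) / (r ^ 2 + 2 * δ * a * r + a ^ 2) ≤
      ((r + δ * c) / (r + δ * a)) ^ 2 := by
  have ha : 0 ≤ a := hc.trans hca
  rw [div_pow, div_le_div_iff₀ (by positivity) (by positivity), ← sub_nonneg,
    sq_mul_sub_mul_sq_eq]
  have hδsq : 0 ≤ 1 - δ ^ 2 := by nlinarith
  have hac : 0 ≤ a - c := sub_nonneg.2 hca
  positivity

/-- Lemma A.3: for `a, b ∈ ℝ` with `|b| ≤ a`, `0 ≤ δ ≤ 1` and `r > 0`,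
`(r² + 2δbr + b²)/(r² + 2δar + a²) ≤ ((r + δ|b|)/(r + δa))²`. -/
theorem mobius_factor_ineq (a b δ r : ℝ) (hb : |b| ≤ a) (hδ0 : 0 ≤ δ) (hδ1 : δ ≤ 1)
    (hr : 0 < r) :
    (r ^ 2 + 2 * δ * b * r + b ^ 2) / (r ^ 2 + 2 * δ * a * r + a ^ 2) ≤
      ((r + δ * |b|) / (r + δ * a)) ^ 2 := by
  have ha : 0 ≤ a := (abs_nonneg b).trans hb
  calc (r ^ 2 + 2 * δ * b * r + b ^ 2) / (r ^ 2 + 2 * δ * a * r + a ^ 2)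
      ≤ (r ^ 2 + 2 * δ * |b| * r + |b| ^ 2) / (r ^ 2 + 2 * δ * a * r + a ^ 2) :=
        div_le_div_of_nonneg_right (sq_add_two_mul_add_sq_le_abs hδ0 hr.le b) (by positivity)
    _ ≤ ((r + δ * |b|) / (r + δ * a)) ^ 2 := div_le_sq_div_of_le (abs_nonneg b) hb hδ0 hδ1 hr
end

section
/- For each α > 0 there exists a constant M > 0 such that for all n ∈ ℕ and all real numbers c > d ≥ 0, ∫₀^∞ (r+d)ⁿ/(r+c)^{n+α+1} dr ≤ M / ((c−d)^α · n^α). -/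
/-!
Bounding `(r + d) / (r + c) = 1 - (c - d) / (r + c)` by `exp (-(c - d) / (r + c))` dominates the
integrand by `exp (-a / t) * t ^ (-(α + 1))` with `t = r + c` and `a = n (c - d)`. Extending the
integral from `t > c` to `t > 0` and substituting `t = 1 / x` turns it into the Gamma integral
`∫₀^∞ x ^ (α - 1) e ^ (-a x) dx = Γ(α) / a ^ α`, so `M = Γ(α)` works.
-/

open MeasureTheory Set Real

lemma pow_le_exp_neg_mul_one_sub {x : ℝ} (hx : 0 ≤ x) (n : ℕ) :
    x ^ n ≤ exp (-(n * (1 - x))) := by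
  calc x ^ n ≤ exp (-(1 - x)) ^ n := by
        gcongr
        linarith [add_one_le_exp (-(1 - x))]
    _ = exp (-(n * (1 - x))) := by rw [← exp_nat_mul, mul_neg]

lemma pow_div_rpow_le_exp_mul_rpow {s t : ℝ} (hs : 0 ≤ s) (ht : 0 < t) (n : ℕ) (α : ℝ) :
    s ^ n / t ^ ((n : ℝ) + α + 1) ≤ exp (-(n * (t - s) / t)) * t ^ (-(α + 1)) := by
  have hsplit : s ^ n / t ^ ((n : ℝ) + α + 1) = (s / t) ^ n * t ^ (-(α + 1)) := by
    rw [add_assoc, rpow_add ht, rpow_natCast, rpow_neg ht.le, div_pow]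
    field_simp
  have hratio : n * (1 - s / t) = n * (t - s) / t := by field_simp
  rw [hsplit, ← hratio]
  gcongr
  exact pow_le_exp_neg_mul_one_sub (by positivity) n

lemma setLIntegral_Ioi_zero_comp_add_le (f : ℝ → ENNReal) {c : ℝ} (hc : 0 ≤ c) :
    ∫⁻ r in Ioi 0, f (r + c) ≤ ∫⁻ t in Ioi 0, f t := by
  have hshift : ∫⁻ r in Ioi 0, f (r + c) = ∫⁻ t in Ioi c, f t := by
    simpa only [preimage_add_const_Ioi, sub_self] using
      (measurePreserving_add_right volume c).setLIntegral_comp_preimage_emb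
        (measurableEmbedding_addRight c) f (Ioi c)
  exact hshift.trans_le (lintegral_mono_set (Ioi_subset_Ioi hc))

lemma setLIntegral_Ioi_zero_comp_inv (g : ℝ → ENNReal) :
    ∫⁻ x in Ioi 0, ENNReal.ofReal (x ^ 2)⁻¹ * g x⁻¹ = ∫⁻ t in Ioi 0, g t := by
  have himage : Inv.inv '' Ioi (0 : ℝ) = Ioi 0 := by
    refine Subset.antisymm ?_ fun t (ht : 0 < t) ↦ ⟨t⁻¹, inv_pos.2 ht, inv_inv t⟩
    rintro _ ⟨x, hx : 0 < x, rfl⟩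
    exact inv_pos.2 hx
  conv_rhs => rw [← himage]
  rw [lintegral_image_eq_lintegral_abs_deriv_mul measurableSet_Ioi
    (fun x hx ↦ (hasDerivAt_inv (ne_of_gt hx)).hasDerivWithinAt) inv_injective.injOn]
  simp only [abs_neg, abs_inv, abs_pow, sq_abs]

lemma lintegral_exp_neg_div_mul_rpow_Ioi {α a : ℝ} (hα : 0 < α) (ha : 0 < a) :
    ∫⁻ t in Ioi 0, ENNReal.ofReal (exp (-(a / t)) * t ^ (-(α + 1))) =
      ENNReal.ofReal (Gamma α / a ^ α) := by
  rw [← setLIntegral_Ioi_zero_comp_inv]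
  have hintegrand : ∀ x ∈ Ioi (0 : ℝ),
      ENNReal.ofReal (x ^ 2)⁻¹ * ENNReal.ofReal (exp (-(a / x⁻¹)) * x⁻¹ ^ (-(α + 1))) =
        ENNReal.ofReal (x ^ (α - 1) * exp (-(a * x))) := by
    intro x (hx : 0 < x)
    rw [← ENNReal.ofReal_mul (by positivity), div_inv_eq_mul, inv_rpow hx.le, rpow_neg hx.le,
      inv_inv, show α + 1 = α - 1 + 2 by ring, rpow_add hx, rpow_two]
    field_simp
  have hgamma : IntegrableOn (fun x : ℝ ↦ x ^ (α - 1) * exp (-(a * x))) (Ioi 0) := by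
    simpa only [rpow_one, neg_mul] using
      integrableOn_rpow_mul_exp_neg_mul_rpow (by linarith : -1 < α - 1) one_pos ha
  rw [setLIntegral_congr_fun measurableSet_Ioi hintegrand,
    ← ofReal_integral_eq_lintegral_ofReal hgamma
      ((ae_restrict_mem measurableSet_Ioi).mono fun x (hx : 0 < x) ↦ by positivity),
    integral_rpow_mul_exp_neg_mul_Ioi hα ha, one_div, inv_rpow ha.le, inv_mul_eq_div]

/-- Lemma A.4: for each `α > 0` there is `M > 0` such that for all `n ∈ ℕ` (with `n ≥ 1`)
and all reals `c > d ≥ 0`,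
`∫₀^∞ (r+d)ⁿ/(r+c)^{n+α+1} dr ≤ M / ((c-d)^α n^α)`. -/
theorem integral_ratio_le (α : ℝ) (hα : 0 < α) :
    ∃ M : ℝ, 0 < M ∧ ∀ n : ℕ, 1 ≤ n → ∀ c d : ℝ, 0 ≤ d → d < c →
      (∫⁻ r in Set.Ioi (0 : ℝ),
          ENNReal.ofReal ((r + d) ^ n / (r + c) ^ ((n : ℝ) + α + 1))) ≤
        ENNReal.ofReal (M / ((c - d) ^ α * (n : ℝ) ^ α)) := by
  refine ⟨Gamma α, Gamma_pos_of_pos hα, fun n hn c d hd hdc ↦ ?_⟩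
  have hn0 : (0 : ℝ) < n := by exact_mod_cast hn
  have hcd : 0 < c - d := sub_pos.2 hdc
  let G : ℝ → ENNReal := fun t ↦ ENNReal.ofReal (exp (-(n * (c - d) / t)) * t ^ (-(α + 1)))
  calc (∫⁻ r in Ioi 0, ENNReal.ofReal ((r + d) ^ n / (r + c) ^ ((n : ℝ) + α + 1)))
      ≤ ∫⁻ r in Ioi 0, G (r + c) := by
        refine setLIntegral_mono' measurableSet_Ioi fun r (hr : 0 < r) ↦ ?_
        refine ENNReal.ofReal_le_ofReal ?_
        simpa only [add_sub_add_left_eq_sub] using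
          pow_div_rpow_le_exp_mul_rpow (s := r + d) (t := r + c) (by linarith) (by linarith) n α
    _ ≤ ∫⁻ t in Ioi 0, G t := setLIntegral_Ioi_zero_comp_add_le G (hd.trans hdc.le)
    _ = ENNReal.ofReal (Gamma α / (n * (c - d)) ^ α) :=
        lintegral_exp_neg_div_mul_rpow_Ioi hα (mul_pos hn0 hcd)
    _ = ENNReal.ofReal (Gamma α / ((c - d) ^ α * (n : ℝ) ^ α)) := by
        rw [mul_rpow hn0.le hcd.le, mul_comm]
end
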